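/- arXiv:2402.01036 — 2 statements merged into one kernel-verified Lean document; each statement's English description precedes it below -/
import Mathlib

section
/- Let λ0 > 0, t0 > 0, CA ≥ 0, and let I : [t0, ∞) → ℝ be a differentiable nonnegative function satisfying I'(t) ≤ -2λ0 I(t) + CA/t for all t ≥ t0. Then there exists a constant C0 > 0 such that I(t) ≤ C0/t for all t ≥ t0. -/
/-!
For `t ≥ t₁ := max t₀ (1/λ₀)` the function `J t = t * I t` satisfies
`J' = I + t I' ≤ (1 - 2λ₀t) I + C_A ≤ -λ₀ J + C_A`, using `I ≥ 0`; Grönwall's inequality then keeps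
`J` below `max (J t₁) (C_A/λ₀)`. On the compact interval `[t₀, t₁]` the continuous function `J` is
bounded anyway, so `t * I t` is bounded on all of `[t₀, ∞)`.
-/

open Set Real

theorem le_max_of_hasDerivAt_le_neg_mul_add {f f' : ℝ → ℝ} {a K ε : ℝ} (hK : 0 < K)
    (hf : ∀ t ≥ a, HasDerivAt f (f' t) t) (hf' : ∀ t ≥ a, f' t ≤ -K * f t + ε)
    {t : ℝ} (ht : a ≤ t) : f t ≤ max (f a) (ε / K) := by
  have hgronwall := le_gronwallBound_of_liminf_deriv_right_le (δ := f a) (b := t)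
    (fun x hx => (hf x hx.1).continuousAt.continuousWithinAt)
    (fun x hx _ hr => (hf x hx.1).hasDerivWithinAt.liminf_right_slope_le hr)
    le_rfl (fun x hx => hf' x hx.1) t ⟨ht, le_rfl⟩
  rw [gronwallBound_of_K_ne_0 (neg_ne_zero.mpr hK.ne')] at hgronwall
  set e := exp (-K * (t - a))
  have he : e ≤ 1 := exp_le_one_iff.mpr (by nlinarith)
  -- the Grönwall bound is the convex combination `e • f a + (1 - e) • (ε / K)`
  calc f t ≤ e * f a + (1 - e) * (ε / K) := by
        convert hgronwall using 1; simp only [div_neg]; ring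
    _ ≤ e * max (f a) (ε / K) + (1 - e) * max (f a) (ε / K) := by
        have : 0 ≤ 1 - e := by linarith
        gcongr
        · exact le_max_left _ _
        · exact le_max_right _ _
    _ = max (f a) (ε / K) := by ring

theorem add_mul_le_neg_mul_mul_add {lam t c i i' : ℝ} (ht : 0 < t) (hlt : 1 ≤ lam * t)
    (hi : 0 ≤ i) (hi' : i' ≤ -2 * lam * i + c / t) :
    i + t * i' ≤ -lam * (t * i) + c := by
  have hti' : t * i' ≤ -2 * lam * (t * i) + c := by
    calc t * i' ≤ t * (-2 * lam * i + c / t) := mul_le_mul_of_nonneg_left hi' ht.le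
      _ = -2 * lam * (t * i) + c := by field_simp
  nlinarith

theorem stmt1_general (lam0 t0 CA : ℝ) (hlam : 0 < lam0) (ht0 : 0 < t0)
    (I I' : ℝ → ℝ)
    (hdiff : ∀ t ≥ t0, HasDerivAt I (I' t) t)
    (hnonneg : ∀ t ≥ t0, 0 ≤ I t)
    (hineq : ∀ t ≥ t0, I' t ≤ -2 * lam0 * I t + CA / t) :
    ∃ C0 > 0, ∀ t ≥ t0, I t ≤ C0 / t := by
  set t1 := max t0 (1 / lam0)
  have ht0t1 : t0 ≤ t1 := le_max_left _ _
  have hJ : ∀ t ≥ t0, HasDerivAt (fun s => s * I s) (I t + t * I' t) t := fun t ht =>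
    ((hasDerivAt_id' t).mul (hdiff t ht)).congr_deriv (by ring)
  obtain ⟨M, hM⟩ := (isCompact_Icc (a := t0) (b := t1)).bddAbove_image
    (f := fun s => s * I s) fun t ht => (hJ t ht.1).continuousAt.continuousWithinAt
  have hJ_le_M : ∀ t ∈ Icc t0 t1, t * I t ≤ M := fun t ht => hM (mem_image_of_mem _ ht)
  have hJ_tail : ∀ t ≥ t1, t * I t ≤ max M (CA / lam0) := fun t ht => by
    refine (le_max_of_hasDerivAt_le_neg_mul_add hlam (fun s hs => hJ s (ht0t1.trans hs))
      (fun s hs => ?_) ht).trans (max_le_max_right _ (hJ_le_M t1 ⟨ht0t1, le_rfl⟩))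
    have hs0 : t0 ≤ s := ht0t1.trans hs
    have hlams : 1 ≤ lam0 * s := by
      rw [← div_le_iff₀' hlam]; exact (le_max_right _ _).trans hs
    exact add_mul_le_neg_mul_mul_add (ht0.trans_le hs0) hlams (hnonneg s hs0) (hineq s hs0)
  refine ⟨max (max M (CA / lam0)) 1, by positivity, fun t ht => ?_⟩
  rw [le_div_iff₀' (ht0.trans_le ht)]
  refine le_trans ?_ (le_max_left _ _)
  rcases le_total t t1 with h | h
  · exact (hJ_le_M t ⟨ht, h⟩).trans (le_max_left _ _)
  · exact hJ_tail t h

theorem stmt1 (lam0 t0 CA : ℝ) (hlam : 0 < lam0) (ht0 : 0 < t0) (hCA : 0 ≤ CA)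
    (I I' : ℝ → ℝ)
    (hdiff : ∀ t ≥ t0, HasDerivAt I (I' t) t)
    (hnonneg : ∀ t ≥ t0, 0 ≤ I t)
    (hineq : ∀ t ≥ t0, I' t ≤ -2 * lam0 * I t + CA / t) :
    ∃ C0 > 0, ∀ t ≥ t0, I t ≤ C0 / t :=
  stmt1_general lam0 t0 CA hlam ht0 I I' hdiff hnonneg hineq
end

section
/- Let r > 0, z2 ∈ (0, (r + √(r² + 4r))/2), λ̲ ≤ u ≤ λ̄ with λ̲ > 0, and suppose -λ̄² + 2(r(1 + z2) - z2²)λ̲ - ((1 - z2)r + z2²)² - 2 z2 ρ > 0 and r² + r z2² - λ̄ z2 - (1/2)ρ > 0, where ρ ∈ ℝ. Then the symmetric matrix M(u) = [[z2, (1/2)(r + r z2 + z2² - u)], [(1/2)(r + r z2 + z2² - u), r² + r z2² - z2 u - (1/2)ρ]] is positive definite for every u ∈ [λ̲, λ̄]. -/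
/-!
The matrix is a real symmetric `2 × 2` matrix with `(1,1)`-entry `z2 > 0`, so it suffices that
its determinant is positive. Four times the determinant equals
`-u ^ 2 + 2 k u - ((1 - z2) r + z2 ^ 2) ^ 2 - 2 z2 ρ` with `k = r (1 + z2) - z2 ^ 2`, and the bound
on `z2` says exactly that `k > 0`, i.e. that `z2` lies below the positive root of
`t ^ 2 - r t - r`. For `0 < λ̲ ≤ u ≤ λ̄` this is at least `-λ̄ ^ 2 + 2 k λ̲ - …`, which is positive
by hypothesis.
-/

theorem Matrix.posDef_of_fin_two {K : Type*} [Field K] [LinearOrder K] [IsStrictOrderedRing K]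
    [StarRing K] [TrivialStar K] {a b c : K} (ha : 0 < a) (hdet : 0 < a * c - b ^ 2) :
    (!![a, b; b, c]).PosDef := by
  refine Matrix.posDef_iff_dotProduct_mulVec.mpr ⟨?_, fun x hx => ?_⟩
  · ext i j
    fin_cases i <;> fin_cases j <;> simp [Matrix.conjTranspose_apply]
  simp only [dotProduct, Pi.star_apply, star_trivial, Matrix.mulVec, Matrix.of_apply,
    Matrix.cons_val', Matrix.cons_val_fin_one, Fin.sum_univ_two, Matrix.cons_val_zero,
    Matrix.cons_val_one]
  have completed_square : a * (x 0 * (a * x 0 + b * x 1) + x 1 * (b * x 0 + c * x 1))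
      = (a * x 0 + b * x 1) ^ 2 + (a * c - b ^ 2) * x 1 ^ 2 := by ring
  refine pos_of_mul_pos_right (completed_square ▸ ?_) ha.le
  rcases eq_or_ne (x 1) 0 with h1 | h1
  · have h0 : x 0 ≠ 0 := fun h0 => hx (by ext i; fin_cases i <;> assumption)
    simp only [h1, mul_zero, add_zero, ne_eq, OfNat.ofNat_ne_zero, not_false_eq_true, zero_pow]
    positivity
  · positivity

theorem sq_lt_mul_one_add_of_lt_half_add_sqrt {r z : ℝ} (hr : 0 < r) (hz : 0 ≤ z)
    (h : z < (r + √(r ^ 2 + 4 * r)) / 2) : z ^ 2 < r * (1 + z) := by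
  have hs : √(r ^ 2 + 4 * r) ^ 2 = r ^ 2 + 4 * r := Real.sq_sqrt (by positivity)
  have hrs : r < √(r ^ 2 + 4 * r) := by
    nlinarith [Real.sqrt_nonneg (r ^ 2 + 4 * r)]
  nlinarith

theorem stmt7_general (r z2 lamL lamU u ρ : ℝ) (hr : 0 < r)
    (hz2 : z2 ∈ Set.Ioo 0 ((r + Real.sqrt (r ^ 2 + 4 * r)) / 2))
    (hlamL : 0 < lamL) (hu : u ∈ Set.Icc lamL lamU)
    (h1 : -lamU ^ 2 + 2 * (r * (1 + z2) - z2 ^ 2) * lamL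
        - ((1 - z2) * r + z2 ^ 2) ^ 2 - 2 * z2 * ρ > 0) :
    (!![z2, (1 / 2) * (r + r * z2 + z2 ^ 2 - u);
        (1 / 2) * (r + r * z2 + z2 ^ 2 - u),
        r ^ 2 + r * z2 ^ 2 - z2 * u - (1 / 2) * ρ]).PosDef := by
  obtain ⟨hz2_pos, hz2_lt⟩ := hz2
  obtain ⟨hu_ge, hu_le⟩ := hu
  set k := r * (1 + z2) - z2 ^ 2
  have hk : 0 < k := sub_pos.mpr (sq_lt_mul_one_add_of_lt_half_add_sqrt hr hz2_pos.le hz2_lt)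
  have hu_sq : u ^ 2 ≤ lamU ^ 2 := pow_le_pow_left₀ (hlamL.trans_le hu_ge).le hu_le 2
  have hku : k * lamL ≤ k * u := mul_le_mul_of_nonneg_left hu_ge hk.le
  refine Matrix.posDef_of_fin_two hz2_pos ?_
  have hdet : z2 * (r ^ 2 + r * z2 ^ 2 - z2 * u - (1 / 2) * ρ)
      - ((1 / 2) * (r + r * z2 + z2 ^ 2 - u)) ^ 2
      = (-u ^ 2 + 2 * k * u - ((1 - z2) * r + z2 ^ 2) ^ 2 - 2 * z2 * ρ) / 4 := by ring
  rw [hdet]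
  linarith

theorem stmt7 (r z2 lamL lamU u ρ : ℝ) (hr : 0 < r)
    (hz2 : z2 ∈ Set.Ioo 0 ((r + Real.sqrt (r ^ 2 + 4 * r)) / 2))
    (hlamL : 0 < lamL) (hu : u ∈ Set.Icc lamL lamU)
    (h1 : -lamU ^ 2 + 2 * (r * (1 + z2) - z2 ^ 2) * lamL
        - ((1 - z2) * r + z2 ^ 2) ^ 2 - 2 * z2 * ρ > 0)
    (h2 : r ^ 2 + r * z2 ^ 2 - lamU * z2 - (1 / 2) * ρ > 0) :
    (!![z2, (1 / 2) * (r + r * z2 + z2 ^ 2 - u);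
        (1 / 2) * (r + r * z2 + z2 ^ 2 - u),
        r ^ 2 + r * z2 ^ 2 - z2 * u - (1 / 2) * ρ]).PosDef :=
  stmt7_general r z2 lamL lamU u ρ hr hz2 hlamL hu h1
end
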